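/- Let n ≥ 1, let A ⊆ M_n(S) be the subring of lower triangular matrices with diagonal entries in the image of k → S, and let P_i (1 ≤ i ≤ n) be the column modules as below. For 1 ≤ i ≤ n−1 let s_i : P_n → P_i be the inclusion of P_n as a submodule of P_i. Then for each 1 ≤ i ≤ n−1 the induced map id ⊗ s_i : M_n(S) ⊗_A P_n → M_n(S) ⊗_A P_i is an isomorphism, where M_n(S) is regarded as a right A-module via the inclusion A ⊆ M_n(S). -/

import Mathlib

open scoped TensorProduct
open Function

universe u v w

section TT
/-! Tensor product `R ⊗_C P` where `R` is made into a right `C`-module via a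
ring homomorphism `f : C →+* R`, and `P` is a left `C`-module. -/

variable {C : Type u} {R : Type v} [Ring C] [Ring R] (f : C →+* R)

def TT.rels (P : Type w) [AddCommGroup P] [Module C P] :
    Submodule ℤ (TensorProduct ℤ R P) :=
  Submodule.span ℤ {z | ∃ (r : R) (c : C) (p : P),
    z = (r * f c) ⊗ₜ[ℤ] p - r ⊗ₜ[ℤ] (c • p)}

/-- `R ⊗_C P`, with `R` a right `C`-module via `f : C →+* R`. -/
def TT (P : Type w) [AddCommGroup P] [Module C P] : Type (max v w) :=
  TensorProduct ℤ R P ⧸ TT.rels f P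

noncomputable instance (P : Type w) [AddCommGroup P] [Module C P] :
    AddCommGroup (TT f P) :=
  inferInstanceAs (AddCommGroup (TensorProduct ℤ R P ⧸ TT.rels f P))

/-- The class of `r ⊗ p` in `R ⊗_C P`. -/
noncomputable def TT.mk {P : Type w} [AddCommGroup P] [Module C P] (r : R) (p : P) :
    TT f P := Submodule.Quotient.mk (r ⊗ₜ[ℤ] p)

/-- The map `R ⊗_C P → R ⊗_C P'` induced by a map of left `C`-modules. -/
noncomputable def TT.map {P P' : Type w} [AddCommGroup P] [Module C P]
    [AddCommGroup P'] [Module C P'] (g : P →ₗ[C] P') : TT f P →ₗ[ℤ] TT f P' :=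
  Submodule.mapQ _ _ (LinearMap.lTensor R g.toAddMonoidHom.toIntLinearMap) (by
    rw [TT.rels, Submodule.span_le]
    rintro z ⟨r, c, p, rfl⟩
    simp only [SetLike.mem_coe, Submodule.mem_comap, map_sub, LinearMap.lTensor_tmul,
      AddMonoidHom.coe_toIntLinearMap, LinearMap.toAddMonoidHom_coe]
    exact Submodule.subset_span ⟨r, c, g p, by
      show LinearMap.lTensor R g.toAddMonoidHom.toIntLinearMap _ = _
      simp [map_smul]⟩)

end TT

variable (k : Type u) (S : Type u) [CommRing k] [Ring S] [Algebra k S] (n : ℕ)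

/-- The subring of `n × n` lower triangular matrices over `S` whose diagonal
entries lie in the image of `k → S`. -/
def lowTri : Subring (Matrix (Fin n) (Fin n) S) where
  carrier := {m | (∀ p q : Fin n, p < q → m p q = 0) ∧
    ∀ p : Fin n, m p p ∈ (algebraMap k S).range}
  zero_mem' := ⟨fun _ _ _ => rfl, fun _ => zero_mem _⟩
  one_mem' := ⟨fun p q h => Matrix.one_apply_ne (ne_of_lt h), fun _ => by
    simpa [Matrix.one_apply] using one_mem (algebraMap k S).range⟩
  add_mem' := fun {a b} ha hb => ⟨fun p q h => by
      simp [Matrix.add_apply, ha.1 p q h, hb.1 p q h],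
    fun p => add_mem (ha.2 p) (hb.2 p)⟩
  neg_mem' := fun {a} ha => ⟨fun p q h => by simp [Matrix.neg_apply, ha.1 p q h],
    fun p => neg_mem (ha.2 p)⟩
  mul_mem' := fun {a b} ha hb => by
    constructor
    · intro p q h
      rw [Matrix.mul_apply]
      apply Finset.sum_eq_zero
      intro l _
      rcases lt_or_ge p l with h' | h'
      · rw [ha.1 p l h', zero_mul]
      · rw [hb.1 l q (lt_of_le_of_lt h' h), mul_zero]
    · intro p
      rw [Matrix.mul_apply]
      rw [Finset.sum_eq_single p]
      · exact mul_mem (ha.2 p) (hb.2 p)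
      · intro l _ hl
        rcases lt_or_gt_of_ne hl with h' | h'
        · rw [hb.1 l p h', mul_zero]
        · rw [ha.1 p l h', zero_mul]
      · intro h; exact absurd (Finset.mem_univ p) h

/-- The space of column vectors `v ∈ Sⁿ` with `v j = 0` for `j < i` and
`v i` in the image of `k → S` (as a `k`-submodule of `Sⁿ`). -/
def Pcol (i : ℕ) : Submodule k (Fin n → S) where
  carrier := {v | (∀ j : Fin n, (j : ℕ) < i → v j = 0) ∧
    ∀ j : Fin n, (j : ℕ) = i → v j ∈ (algebraMap k S).range}
  zero_mem' := ⟨fun _ _ => rfl, fun _ _ => zero_mem _⟩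
  add_mem' := fun {a b} ha hb => ⟨fun j hj => by simp [Pi.add_apply, ha.1 j hj, hb.1 j hj],
    fun j hj => add_mem (ha.2 j hj) (hb.2 j hj)⟩
  smul_mem' := fun c v hv => ⟨fun j hj => by simp [Pi.smul_apply, hv.1 j hj],
    fun j hj => by
      obtain ⟨x, hx⟩ := hv.2 j hj
      exact ⟨c * x, by rw [map_mul, Pi.smul_apply, ← hx, Algebra.smul_def]⟩⟩

lemma mulVec_mem_Pcol {i : ℕ} {a : Matrix (Fin n) (Fin n) S} (ha : a ∈ lowTri k S n)
    {v : Fin n → S} (hv : v ∈ Pcol k S n i) : a.mulVec v ∈ Pcol k S n i := by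
  constructor
  · intro j hj
    rw [Matrix.mulVec, dotProduct]
    apply Finset.sum_eq_zero
    intro l _
    rcases lt_or_ge (l : ℕ) i with h' | h'
    · rw [hv.1 l h', mul_zero]
    · rw [ha.1 j l (by rw [Fin.lt_def]; omega), zero_mul]
  · intro j hj
    have : a.mulVec v j = a j j * v j := by
      rw [Matrix.mulVec, dotProduct]
      rw [Finset.sum_eq_single j]
      · intro l _ hl
        rcases lt_or_gt_of_ne hl with h' | h'
        · rw [hv.1 l (by rw [Fin.lt_def] at h'; omega), mul_zero]
        · rw [ha.1 j l h', zero_mul]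
      · intro h; exact absurd (Finset.mem_univ j) h
    rw [this]
    exact mul_mem (ha.2 j) (hv.2 j hj)

/-- Left action of the subring `lowTri k S n` on the column modules. -/
noncomputable instance Pcol.smulLowTri (i : ℕ) :
    SMul (lowTri k S n) (Pcol k S n i) :=
  ⟨fun a v => ⟨a.1.mulVec v.1, mulVec_mem_Pcol k S n a.2 v.2⟩⟩

noncomputable instance Pcol.moduleLowTri (i : ℕ) :
    Module (lowTri k S n) (Pcol k S n i) where
  smul := (· • ·)
  one_smul v := Subtype.ext (Matrix.one_mulVec v.1)
  mul_smul a b v := Subtype.ext (Matrix.mulVec_mulVec v.1 a.1 b.1).symm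
  smul_zero a := Subtype.ext (Matrix.mulVec_zero a.1)
  smul_add a v w := Subtype.ext (Matrix.mulVec_add a.1 v.1 w.1)
  add_smul a b v := Subtype.ext (Matrix.add_mulVec a.1 b.1 v.1)
  zero_smul v := Subtype.ext (Matrix.zero_mulVec v.1)

@[simp] lemma Pcol.smul_def (i : ℕ) (a : lowTri k S n) (v : Pcol k S n i) :
    (a • v : Pcol k S n i).1 = a.1.mulVec v.1 := rfl

instance Pcol.smulCommClass (i : ℕ) :
    SMulCommClass k (lowTri k S n) (Pcol k S n i) where
  smul_comm c a v := Subtype.ext (Matrix.mulVec_smul a.1 c v.1).symm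

/-- Left action of `lowTri k S n` on the module of all column vectors. -/
noncomputable instance colSMul : SMul (lowTri k S n) (Fin n → S) :=
  ⟨fun a v => a.1.mulVec v⟩

noncomputable instance colModule : Module (lowTri k S n) (Fin n → S) where
  smul := (· • ·)
  one_smul v := Matrix.one_mulVec v
  mul_smul a b v := (Matrix.mulVec_mulVec v a.1 b.1).symm
  smul_zero a := Matrix.mulVec_zero a.1
  smul_add a v w := Matrix.mulVec_add a.1 v w
  add_smul a b v := Matrix.add_mulVec a.1 b.1 v
  zero_smul v := Matrix.zero_mulVec v

/-- Right action of `lowTri k S n` on the module of all row vectors. -/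
noncomputable instance rowSMul : SMul (lowTri k S n)ᵐᵒᵖ (Fin n → S) :=
  ⟨fun a v => Matrix.vecMul v a.unop.1⟩

noncomputable instance rowModule : Module (lowTri k S n)ᵐᵒᵖ (Fin n → S) where
  smul := (· • ·)
  one_smul v := Matrix.vecMul_one v
  mul_smul a b v := by
    show Matrix.vecMul v (b.unop.1 * a.unop.1) = Matrix.vecMul (Matrix.vecMul v b.unop.1) a.unop.1
    rw [Matrix.vecMul_vecMul]
  smul_zero a := Matrix.zero_vecMul a.unop.1
  smul_add a v w := Matrix.add_vecMul a.unop.1 v w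
  add_smul a b v := Matrix.vecMul_add a.unop.1 b.unop.1 v
  zero_smul v := Matrix.vecMul_zero v

lemma Pcol_anti {i j : ℕ} (h : i ≤ j) : Pcol k S n j ≤ Pcol k S n i := by
  rintro v ⟨h1, h2⟩
  constructor
  · intro l hl
    exact h1 l (lt_of_lt_of_le hl h)
  · intro l hl
    rcases eq_or_lt_of_le h with rfl | h'
    · exact h2 l hl
    · rw [h1 l (by omega)]
      exact zero_mem _


/-!
Write `e_c` for the `c`-th unit column and `vecMulVec p e_c` for the matrix whose only nonzero
column is the `c`-th one, equal to `p`. For `p ∈ P_i` and `i ≤ c`, both `vecMulVec p e_i` and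
`vecMulVec e_c e_i` lie in `A`, `p = vecMulVec p e_i • e_i` and
`vecMulVec p e_c * vecMulVec e_c e_i = vecMulVec p e_i`. Moving these matrices across the tensor
sign gives `X ⊗ p = X * vecMulVec p e_c ⊗ e_c` in `Mₙ(S) ⊗_A P_i`. Taking `c = j` for `i ≤ j < n`,
the balanced map `X ⊗ p ↦ X * vecMulVec p e_j ⊗ e_j` is therefore inverse to the map induced by
`P_j ⊆ P_i`, on both sides.
-/

namespace TT

variable {C : Type u} {R : Type v} [Ring C] [Ring R] (f : C →+* R)
variable {P : Type w} [AddCommGroup P] [Module C P]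

lemma mk_mul_right (r : R) (c : C) (p : P) : mk f (r * f c) p = mk f r (c • p) :=
  (Submodule.Quotient.eq _).mpr (Submodule.subset_span ⟨r, c, p, rfl⟩)

noncomputable def mkₗ : R →ₗ[ℤ] P →ₗ[ℤ] TT f P :=
  (TensorProduct.mk ℤ R P).compr₂ (rels f P).mkQ

lemma linearMap_ext {M : Type*} [AddCommGroup M] {φ ψ : TT f P →ₗ[ℤ] M}
    (h : ∀ r p, φ (mk f r p) = ψ (mk f r p)) : φ = ψ :=
  Submodule.linearMap_qext _ (TensorProduct.ext' h)

noncomputable def lift {M : Type*} [AddCommGroup M] (φ : R →ₗ[ℤ] P →ₗ[ℤ] M)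
    (hφ : ∀ r c p, φ (r * f c) p = φ r (c • p)) : TT f P →ₗ[ℤ] M :=
  Submodule.liftQ _ (TensorProduct.lift φ) <| (Submodule.span_le).mpr <| by
    rintro _ ⟨r, c, p, rfl⟩
    change TensorProduct.lift φ _ = 0
    rw [map_sub, TensorProduct.lift.tmul, TensorProduct.lift.tmul, hφ, sub_self]

end TT

section Pcol

variable {k S n}
open Matrix

lemma vecMulVec_single_mem_lowTri {c : Fin n} {v : Fin n → S} (hv : v ∈ Pcol k S n c) :
    vecMulVec v (Pi.single c 1) ∈ lowTri k S n := by
  refine ⟨fun p q hpq => ?_, fun p => ?_⟩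
  · rcases eq_or_ne q c with rfl | hqc
    · simp [vecMulVec_apply, hv.1 p hpq]
    · simp [vecMulVec_apply, hqc]
  · rcases eq_or_ne p c with rfl | hpc
    · simpa [vecMulVec_apply] using hv.2 p rfl
    · simp [vecMulVec_apply, hpc]

lemma single_one_mem_Pcol {c : Fin n} {i : ℕ} (h : i ≤ c) :
    (Pi.single c 1 : Fin n → S) ∈ Pcol k S n i := by
  refine ⟨fun j hj => Pi.single_eq_of_ne (by omega) _, fun j _ => ?_⟩
  rcases eq_or_ne j c with rfl | hjc
  · simp
  · simp [hjc]

def Pcol.inclusion {i j : ℕ} (h : i ≤ j) : Pcol k S n j →ₗ[lowTri k S n] Pcol k S n i where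
  toFun := Submodule.inclusion (Pcol_anti k S n h)
  map_add' _ _ := rfl
  map_smul' _ _ := rfl

lemma TT.mk_eq_mk_vecMulVec_single {i : ℕ} {c : Fin n} (hic : i ≤ c)
    (X : Matrix (Fin n) (Fin n) S) (p : Pcol k S n i) :
    TT.mk (lowTri k S n).subtype X p =
      TT.mk (lowTri k S n).subtype (X * vecMulVec p.1 (Pi.single c 1))
        ⟨Pi.single c 1, single_one_mem_Pcol hic⟩ := by
  let I : Fin n := ⟨i, hic.trans_lt c.2⟩
  let eI : Pcol k S n i := ⟨Pi.single I 1, single_one_mem_Pcol le_rfl⟩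
  let a : lowTri k S n := ⟨vecMulVec p.1 (Pi.single I 1), vecMulVec_single_mem_lowTri p.2⟩
  let b : lowTri k S n :=
    ⟨vecMulVec (Pi.single c 1) (Pi.single I 1),
      vecMulVec_single_mem_lowTri (single_one_mem_Pcol hic)⟩
  have ha : a • eI = p := by ext j; simp [a, eI, vecMulVec_apply]
  have hb : b • eI = ⟨Pi.single c 1, single_one_mem_Pcol hic⟩ := by
    ext j; simp [b, eI, vecMulVec_apply]
  have hab : vecMulVec p.1 (Pi.single c 1) * b.1 = a.1 := by
    simp [a, b, vecMulVec_mul_vecMulVec]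
  calc TT.mk _ X p = TT.mk _ X (a • eI) := by rw [ha]
    _ = TT.mk _ (X * vecMulVec p.1 (Pi.single c 1) * b.1) eI := by
      rw [mul_assoc, hab]; exact (TT.mk_mul_right _ X a eI).symm
    _ = _ := by rw [← hb]; exact TT.mk_mul_right _ _ b eI

noncomputable def TT.pcolRetraction {i j : ℕ} {c : Fin n} (hjc : j ≤ c) :
    TT (lowTri k S n).subtype (Pcol k S n i) →ₗ[ℤ] TT (lowTri k S n).subtype (Pcol k S n j) :=
  TT.lift _
    ((LinearMap.mk₂ ℤ (fun (X : Matrix (Fin n) (Fin n) S) (p : Pcol k S n i) =>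
        X * vecMulVec p.1 (Pi.single c 1))
      (fun _ _ _ => add_mul ..) (fun _ _ _ => smul_mul_assoc ..)
      (fun X p p' => by simp [add_vecMulVec, mul_add])
      (fun z X p => by
        change X * vecMulVec (z • p.1) _ = z • _
        rw [smul_vecMulVec, mul_smul_comm])).compr₂
      ((TT.mkₗ _).flip ⟨Pi.single c 1, single_one_mem_Pcol hjc⟩))
    (fun X a p => by simp [mul_vecMulVec])

noncomputable def TT.pcolEquiv {i j : ℕ} (hij : i ≤ j) (hj : j < n) :
    TT (lowTri k S n).subtype (Pcol k S n j) ≃ₗ[ℤ] TT (lowTri k S n).subtype (Pcol k S n i) :=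
  LinearEquiv.ofLinearMap (TT.map _ (Pcol.inclusion hij))
    (TT.pcolRetraction (c := ⟨j, hj⟩) le_rfl)
    (TT.linearMap_ext _ fun X p => (TT.mk_eq_mk_vecMulVec_single hij X p).symm)
    (TT.linearMap_ext _ fun X p =>
      (TT.mk_eq_mk_vecMulVec_single (c := ⟨j, hj⟩) le_rfl X p).symm)

lemma TT.pcolEquiv_mk {i j : ℕ} (hij : i ≤ j) (hj : j < n) (X : Matrix (Fin n) (Fin n) S)
    (p : Pcol k S n j) :
    TT.pcolEquiv hij hj (TT.mk _ X p) = TT.mk _ X (Submodule.inclusion (Pcol_anti k S n hij) p) :=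
  rfl

end Pcol

/-- Let `k` be a commutative ring, `S` a `k`-algebra flat over `k`,
`n ≥ 1`, `A ⊆ Mₙ(S)` the subring of lower triangular matrices with diagonal entries in
the image of `k → S`, and `P_i` (for `i < n`) the column modules; `P_{n-1}` (the last
one) is contained in every `P_i` and `s_i : P_{n-1} → P_i` denotes the inclusion.  Then
for each `i < n - 1` the induced map `id ⊗ s_i : Mₙ(S) ⊗_A P_{n-1} → Mₙ(S) ⊗_A P_i` is
an isomorphism, where `Mₙ(S)` is a right `A`-module via the inclusion `A ⊆ Mₙ(S)`. -/
theorem statement11 (k S : Type u) [CommRing k] [Ring S] [Algebra k S]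
    (n : ℕ) (i : ℕ) (hi : i < n - 1) :
    ∃ e : TT ((lowTri k S n).subtype) (Pcol k S n (n - 1)) ≃+
          TT ((lowTri k S n).subtype) (Pcol k S n i),
      ∀ (X : Matrix (Fin n) (Fin n) S) (p : Pcol k S n (n - 1)),
        e (TT.mk ((lowTri k S n).subtype) X p) =
          TT.mk ((lowTri k S n).subtype) X
            (Submodule.inclusion (Pcol_anti k S n (by omega)) p) :=
  ⟨(TT.pcolEquiv (by omega) (by omega)).toAddEquiv, TT.pcolEquiv_mk _ (by omega)⟩
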